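/- Let A be a left brace of cardinality p^n (p > 2 prime) satisfying: for all a ∈ A and all b, e_{⌊(p−1)/4⌋}'(a,b) ∈ pA (Property 1'), and e_{⌊(p−1)/4⌋}'(a, ann(p^i)) ⊆ ann(p^{i−1}) for all i ≥ 1 (Property 1''), where e_1'(a,b)=a*b and e_{j+1}'(a,b)=a*e_j'(a,b). Then for every i ≥ 1, ann(p^i) = {a ∈ A : p^i a = 0} is an ideal of the brace A. -/

import Mathlib

universe u

class LeftBrace (A : Type u) extends AddCommGroup A where
  circ : A → A → A
  circ_assoc : ∀ a b c : A, circ (circ a b) c = circ a (circ b c)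
  zero_circ : ∀ a : A, circ 0 a = a
  circ_zero : ∀ a : A, circ a 0 = a
  cinv : A → A
  cinv_circ : ∀ a : A, circ (cinv a) a = 0
  circ_add : ∀ a b c : A, circ a (b + c) + a = circ a b + circ a c

namespace LeftBrace

variable {A : Type u} [LeftBrace A]

/-- `a * b = a∘b - a - b`. -/
def star (a b : A) : A := circ a b - a - b

/-- `cpow a j` is the `j`-th power of `a` in the group `(A, ∘)` (whose identity is `0`). -/
def cpow (a : A) : ℕ → A
  | 0 => 0
  | n+1 => circ a (cpow a n)

/-- `eFun a i = e_{i+1}(a)`: `eFun a 0 = a`, `eFun a (i+1) = a * eFun a i`. -/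
def eFun (a : A) : ℕ → A
  | 0 => a
  | i+1 => star a (eFun a i)

/-- `eStar a b i = e_{i+1}'(a,b)`: `eStar a b 0 = a*b`, `eStar a b (i+1) = a * eStar a b i`. -/
def eStar (a b : A) : ℕ → A
  | 0 => star a b
  | i+1 => star a (eStar a b i)

/-- `nSet A m = mA = {m a : a ∈ A}`. -/
def nSet (A : Type u) [LeftBrace A] (m : ℕ) : Set A := {x | ∃ a : A, m • a = x}

/-- `annSet A m = ann(m) = {a ∈ A : m a = 0}`. -/
def annSet (A : Type u) [LeftBrace A] (m : ℕ) : Set A := {a : A | m • a = 0}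

/-- An ideal of a brace: an additive subgroup closed under `i*a` and `a*i`. -/
def IsBraceIdeal (I : Set A) : Prop :=
  0 ∈ I ∧ (∀ x ∈ I, ∀ y ∈ I, x + y ∈ I) ∧ (∀ x ∈ I, -x ∈ I) ∧
    ∀ x ∈ I, ∀ a : A, star x a ∈ I ∧ star a x ∈ I

/-- Property 1': `e'_{⌊(p-1)/4⌋}(a,b) ∈ pA` for all `a, b`. -/
def Prop1' (A : Type u) [LeftBrace A] (p : ℕ) : Prop :=
  ∀ a b : A, eStar a b ((p-1)/4 - 1) ∈ nSet A p

/-- Property 1'': `e'_{⌊(p-1)/4⌋}(a, ann(p^i)) ⊆ ann(p^{i-1})` for all `i ≥ 1`. -/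
def Prop1'' (A : Type u) [LeftBrace A] (p : ℕ) : Prop :=
  ∀ i : ℕ, 1 ≤ i → ∀ a x : A, (p^i) • x = 0 →
    (p^(i-1)) • eStar a x ((p-1)/4 - 1) = 0

end LeftBrace

/-! ### Auxiliary lemmas -/

namespace LeftBrace

variable {A : Type u} [LeftBrace A]

theorem star_zero' (a : A) : star a 0 = 0 := by
  simp [star, circ_zero]

theorem star_add' (a b c : A) : star a (b + c) = star a b + star a c := by
  have h : circ a (b + c) = circ a b + circ a c - a := by
    rw [← circ_add a b c]; abel
  simp only [star, h]; abel

/-- `λ_a - id` as an additive homomorphism. -/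
def sHom (a : A) : A →+ A where
  toFun := star a
  map_zero' := star_zero' a
  map_add' := star_add' a

@[simp] theorem sHom_apply (a b : A) : sHom a b = star a b := rfl

/-- Iterates of `star a ·`. -/
def DpH (a : A) : ℕ → (A →+ A)
  | 0 => AddMonoidHom.id A
  | j+1 => (sHom a).comp (DpH a j)

@[simp] theorem DpH_zero (a b : A) : DpH a 0 b = b := rfl

theorem DpH_succ (a : A) (j : ℕ) (b : A) : DpH a (j+1) b = star a (DpH a j b) := rfl

theorem DpH_add_apply (a : A) (s t : ℕ) (b : A) :
    DpH a (s + t) b = DpH a s (DpH a t b) := by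
  induction s with
  | zero => simp
  | succ s ih =>
    have h : s + 1 + t = (s + t) + 1 := by omega
    rw [h, DpH_succ, ih, DpH_succ]

theorem eStar_eq_DpH (a b : A) (k : ℕ) : eStar a b k = DpH a (k+1) b := by
  induction k with
  | zero => rfl
  | succ k ih => rw [eStar, ih]; rfl

theorem circ_eq_star (a b : A) : circ a b = star a b + a + b := by
  rw [star]; abel

theorem pascal_sum (k : ℕ) (g : ℕ → A) :
    ∑ j ∈ Finset.range (k+1), ((k+1).choose (j+1)) • g j
      = g 0 + (∑ j ∈ Finset.range k, (k.choose (j+1)) • g j)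
        + ∑ j ∈ Finset.range k, (k.choose (j+1)) • g (j+1) := by
  have h1 : ∀ j ∈ Finset.range (k+1), ((k+1).choose (j+1)) • g j
      = (k.choose j) • g j + (k.choose (j+1)) • g j := by
    intro j _
    rw [Nat.choose_succ_succ]
    exact add_nsmul (g j) _ _
  rw [Finset.sum_congr rfl h1, Finset.sum_add_distrib, Finset.sum_range_succ',
    Nat.choose_zero_right, one_nsmul, Finset.sum_range_succ,
    Nat.choose_succ_self, zero_nsmul, add_zero]
  abel

theorem cpow_eq_sum (x : A) (k : ℕ) :
    cpow x k = ∑ j ∈ Finset.range k, (k.choose (j+1)) • DpH x j x := by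
  induction k with
  | zero => simp [cpow]
  | succ k ih =>
    have hs : star x (cpow x k) = ∑ j ∈ Finset.range k, (k.choose (j+1)) • DpH x (j+1) x := by
      rw [ih, ← sHom_apply, map_sum]
      exact Finset.sum_congr rfl fun j _ => by rw [map_nsmul]; rfl
    have h0 : cpow x (k+1) = circ x (cpow x k) := rfl
    rw [h0, circ_eq_star, hs, pascal_sum, ih]
    simp only [DpH_zero]
    abel

theorem circ_cpow_eq (x a : A) (k : ℕ) :
    circ (cpow x k) a
      = a + (∑ j ∈ Finset.range k, (k.choose (j+1)) • DpH x (j+1) a) + cpow x k := by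
  induction k with
  | zero => simp [cpow, zero_circ]
  | succ k ih =>
    have h0 : cpow x (k+1) = circ x (cpow x k) := rfl
    have h1 : circ (cpow x (k+1)) a = circ x (circ (cpow x k) a) := by
      rw [h0, circ_assoc]
    have hs : star x (∑ j ∈ Finset.range k, (k.choose (j+1)) • DpH x (j+1) a)
        = ∑ j ∈ Finset.range k, (k.choose (j+1)) • DpH x (j+2) a := by
      rw [← sHom_apply, map_sum]
      exact Finset.sum_congr rfl fun j _ => by rw [map_nsmul]; rfl
    have hD1 : star x a = DpH x 1 a := rfl
    rw [h1, ih, circ_eq_star x _, ← sHom_apply, map_add, map_add, sHom_apply, sHom_apply,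
      sHom_apply, hs, pascal_sum, h0, circ_eq_star x (cpow x k), hD1]
    have hg0 : DpH x (0+1) a = DpH x 1 a := rfl
    rw [hg0]
    have hsh : ∀ j : ℕ, DpH x (j+1+1) a = DpH x (j+2) a := fun j => rfl
    simp only [hsh]
    abel

theorem sum_rel {x : A} {k : ℕ} (hc : cpow x k = 0) (a : A) :
    ∑ j ∈ Finset.range k, (k.choose (j+1)) • DpH x (j+1) a = 0 := by
  have h := circ_cpow_eq x a k
  rw [hc, zero_circ, add_zero] at h
  exact (left_eq_add.mp h)

theorem pow_dvd_choose_pow {p : ℕ} (hp : p.Prime) {i k : ℕ} (hk1 : 1 ≤ k) (hk2 : k ≤ p^i) :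
    p ^ (i - k.factorization p) ∣ (p^i).choose k := by
  set v := k.factorization p with hv
  have hk0 : k ≠ 0 := by omega
  have hpv : p ^ v ∣ k := Nat.ordProj_dvd k p
  have hvi : v ≤ i := by
    have h1 : p ^ v ≤ p ^ i := le_trans (Nat.le_of_dvd (by omega) hpv) hk2
    exact (Nat.pow_le_pow_iff_right hp.two_le).mp h1
  have hpi : 0 < p ^ i := pow_pos hp.pos i
  have hid : p ^ i * Nat.choose (p^i - 1) (k-1) = Nat.choose (p^i) k * k := by
    have h := Nat.add_one_mul_choose_eq (p^i - 1) (k-1)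
    have e1 : p^i - 1 + 1 = p^i := by omega
    have e2 : k - 1 + 1 = k := by omega
    rw [e1, e2] at h
    exact h
  have hdvd : p ^ i ∣ Nat.choose (p^i) k * k := ⟨_, hid.symm⟩
  set m := k / p ^ v with hm
  have hkm : k = p ^ v * m := (Nat.ordProj_mul_ordCompl_eq_self k p).symm
  have hcop : Nat.Coprime p m := Nat.coprime_ordCompl hp hk0
  have hdvd2 : p ^ (i - v) * p ^ v ∣ (Nat.choose (p^i) k * m) * p ^ v := by
    have he : p ^ (i-v) * p ^ v = p ^ i := by
      rw [← pow_add]; congr 1; omega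
    rw [he]
    calc p ^ i ∣ Nat.choose (p^i) k * k := hdvd
      _ = (Nat.choose (p^i) k * m) * p ^ v := by rw [hkm]; ring
  have h3 := (Nat.mul_dvd_mul_iff_right (pow_pos hp.pos v)).mp hdvd2
  exact (hcop.pow_left _).dvd_of_dvd_mul_right h3

theorem ineq_aux {p M : ℕ} (hp2 : 2 < p) (hMp : M + 2 ≤ p) :
    ∀ v, 1 ≤ v → v * M + 2 ≤ p ^ v := by
  intro v hv
  induction v with
  | zero => omega
  | succ v ih =>
    rcases Nat.eq_zero_or_pos v with h0 | h0
    · subst h0; simpa using hMp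
    · have h1 := ih h0
      have e1 : (v+1) * M = v * M + M := by ring
      have e2 : 3 * (v * M + 2) ≤ p ^ (v+1) := by
        calc 3 * (v * M + 2) ≤ p * (v * M + 2) := Nat.mul_le_mul_right _ (by omega)
          _ ≤ p * p ^ v := Nat.mul_le_mul_left p h1
          _ = p ^ (v+1) := (pow_succ' p v).symm
      have e3 : M ≤ v * M := Nat.le_mul_of_pos_left M h0
      omega

theorem dv_smul {p M : ℕ} (h1' : ∀ a b : A, ∃ c, p • c = DpH a M b) :
    ∀ (v : ℕ) (a b : A), ∃ c, DpH a (v * M) b = p ^ v • c := by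
  intro v
  induction v with
  | zero => intro a b; exact ⟨b, by simp⟩
  | succ v ih =>
    intro a b
    obtain ⟨c0, hc0⟩ := h1' a b
    obtain ⟨c, hc⟩ := ih a c0
    refine ⟨c, ?_⟩
    have e1 : (v+1) * M = v * M + M := by ring
    rw [e1, DpH_add_apply, ← hc0, map_nsmul, hc, smul_smul, ← pow_succ']

theorem nilp {p n M : ℕ} (hexp : ∀ c : A, p ^ n • c = 0)
    (h1' : ∀ a b : A, ∃ c, p • c = DpH a M b) :
    ∀ (x : A) (j : ℕ) (a : A), n * M ≤ j → DpH x j a = 0 := by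
  intro x j a hj
  obtain ⟨c, hc⟩ := dv_smul h1' n x a
  have h : j = (j - n * M) + n * M := by omega
  rw [h, DpH_add_apply, hc, hexp c, map_zero]

theorem ann_DpH {p M i : ℕ} {x : A}
    (h2' : ∀ s, 1 ≤ s → ∀ a y : A, p ^ s • y = 0 → p ^ (s-1) • DpH a M y = 0)
    (hx : p ^ i • x = 0) :
    ∀ v, p ^ (i - v) • DpH x (v * M) x = 0 := by
  intro v
  induction v with
  | zero => simpa using hx
  | succ v ih =>
    have hsplit : (v+1) * M = M + v * M := by ring
    rcases Nat.lt_or_ge v i with hv | hv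
    · have h := h2' (i - v) (by omega) x (DpH x (v*M) x) ih
      rw [hsplit, DpH_add_apply]
      have he : i - v - 1 = i - (v+1) := by omega
      rwa [he] at h
    · have h0 : DpH x (v * M) x = 0 := by
        have he : i - v = 0 := by omega
        rw [he, pow_zero, one_nsmul] at ih; exact ih
      rw [hsplit, DpH_add_apply, h0, map_zero, smul_zero]

theorem cpow_pow_eq_zero {p M i : ℕ} {x : A} (hp : p.Prime)
    (hineq : ∀ v, 1 ≤ v → v * M + 2 ≤ p ^ v)
    (hann : ∀ v, p ^ (i - v) • DpH x (v * M) x = 0) :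
    cpow x (p ^ i) = 0 := by
  rw [cpow_eq_sum]
  apply Finset.sum_eq_zero
  intro j hj
  have hjlt : j < p ^ i := Finset.mem_range.mp hj
  set k := j + 1 with hk
  set v := k.factorization p with hv
  have hk1 : 1 ≤ k := by omega
  have hk2 : k ≤ p ^ i := by omega
  have hpvk : p ^ v ∣ k := Nat.ordProj_dvd k p
  have hpvle : p ^ v ≤ k := Nat.le_of_dvd (by omega) hpvk
  have hvM : v * M ≤ j := by
    rcases Nat.eq_zero_or_pos v with h0 | h0
    · simp [h0]
    · have := hineq v h0; omega
  obtain ⟨u, hu⟩ := pow_dvd_choose_pow hp hk1 hk2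
  have hz : p ^ (i - v) • DpH x j x = 0 := by
    have hj' : j = (j - v * M) + v * M := by omega
    rw [hj', DpH_add_apply, ← map_nsmul, hann v, map_zero]
  rw [hu, mul_comm, mul_nsmul', hz, smul_zero]

theorem down {p n M i : ℕ} {x : A} (hp : p.Prime)
    (hineq : ∀ v, 1 ≤ v → v * M + 2 ≤ p ^ v)
    (h1' : ∀ a b : A, ∃ c, p • c = DpH a M b)
    (hnil : ∀ (j : ℕ) (a : A), n * M ≤ j → DpH x j a = 0)
    (hrel : ∀ a : A, ∑ j ∈ Finset.range (p ^ i), ((p ^ i).choose (j+1)) • DpH x (j+1) a = 0) :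
    ∀ (d j : ℕ) (a : A), 1 ≤ j → n * M ≤ j + d → p ^ i • DpH x j a = 0 := by
  intro d
  induction d with
  | zero =>
    intro j a hj hnd
    rw [hnil j a (by omega), smul_zero]
  | succ d ih =>
    intro j a hj hnd
    have hpi : 1 ≤ p ^ i := Nat.one_le_pow _ _ hp.pos
    have hrel' := hrel (DpH x (j-1) a)
    have hre : ∀ j' : ℕ, DpH x (j'+1) (DpH x (j-1) a) = DpH x (j' + j) a := by
      intro j'
      rw [← DpH_add_apply]
      have he : j' + 1 + (j - 1) = j' + j := by omega
      rw [he]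
    simp only [hre] at hrel'
    have hrange : Finset.range (p ^ i) = Finset.range ((p ^ i - 1) + 1) := by
      congr 1; omega
    rw [hrange, Finset.sum_range_succ'] at hrel'
    have hz : ∀ t ∈ Finset.range (p ^ i - 1),
        ((p ^ i).choose (t + 1 + 1)) • DpH x (t + 1 + j) a = 0 := by
      intro t ht
      have htlt := Finset.mem_range.mp ht
      set k := t + 2 with hk
      have hk2 : k ≤ p ^ i := by omega
      set v := k.factorization p with hv
      have hpvk : p ^ v ∣ k := Nat.ordProj_dvd k p
      have hpvle : p ^ v ≤ k := Nat.le_of_dvd (by omega) hpvk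
      have hvi : v ≤ i := by
        have hh : p ^ v ≤ p ^ i := hpvle.trans hk2
        exact (Nat.pow_le_pow_iff_right hp.two_le).mp hh
      have hkvM : v * M + 2 ≤ k := by
        rcases Nat.eq_zero_or_pos v with h0 | h0
        · simp only [h0, Nat.zero_mul, zero_add]
          omega
        · exact (hineq v h0).trans hpvle
      obtain ⟨u, hu⟩ := pow_dvd_choose_pow hp (by omega : 1 ≤ k) hk2
      rw [← hv] at hu
      obtain ⟨c, hcc⟩ := dv_smul h1' v x a
      set s := t + 1 + j - v * M with hs
      have hsge : j + 1 ≤ s := by omega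
      have hDs : DpH x (t+1+j) a = p ^ v • DpH x s c := by
        have he : t+1+j = s + v * M := by omega
        rw [he, DpH_add_apply, hcc, map_nsmul]
      have hIH : p ^ i • DpH x s c = 0 := ih s c (by omega) (by omega)
      have hkk : t + 1 + 1 = k := by omega
      have hcoef : (p ^ (i - v) * u) * p ^ v = u * p ^ i := by
        have : p ^ (i - v) * p ^ v = p ^ i := by rw [← pow_add]; congr 1; omega
        calc (p ^ (i - v) * u) * p ^ v = u * (p ^ (i - v) * p ^ v) := by ring
          _ = u * p ^ i := by rw [this]
      rw [hu, hDs, smul_smul, hcoef, mul_smul, hIH, smul_zero]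
    rw [Finset.sum_eq_zero hz, zero_add, Nat.choose_one_right] at hrel'
    simpa using hrel'

end LeftBrace

open LeftBrace in
/-- a brace of cardinality `p^n` (`p > 2`) satisfying Properties 1' and 1''
has every `ann(p^i)` (`i ≥ 1`) an ideal. -/
theorem statement8 {A : Type u} [LeftBrace A] (p n : ℕ) (hp : p.Prime) (hp2 : 2 < p)
    (hcard : Nat.card A = p ^ n) (h1 : Prop1' A p) (h2 : Prop1'' A p) :
    ∀ i : ℕ, 1 ≤ i → IsBraceIdeal (annSet A (p ^ i)) := by
  have hfin : Finite A := Nat.finite_of_card_ne_zero (by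
    rw [hcard]; exact (pow_pos hp.pos n).ne')
  have hexp : ∀ c : A, p ^ n • c = 0 := by
    intro c
    have h := card_nsmul_eq_zero' (G := A) (x := c)
    rwa [hcard] at h
  set M : ℕ := (p-1)/4 - 1 + 1 with hM
  have h1' : ∀ a b : A, ∃ c : A, p • c = DpH a M b := by
    intro a b
    obtain ⟨c, hc⟩ := h1 a b
    exact ⟨c, by rw [hc, eStar_eq_DpH]⟩
  have h2' : ∀ s, 1 ≤ s → ∀ a y : A, p ^ s • y = 0 → p ^ (s-1) • DpH a M y = 0 := by
    intro s hs a y hy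
    have h := h2 s hs a y hy
    rwa [eStar_eq_DpH] at h
  have hMp : M + 2 ≤ p := by omega
  have hineq := ineq_aux (p := p) (M := M) hp2 hMp
  have hnil := nilp hexp h1'
  intro i hi
  refine ⟨?_, ?_, ?_, ?_⟩
  · show p ^ i • (0 : A) = 0
    exact smul_zero _
  · intro x hx y hy
    show p ^ i • (x + y) = 0
    have hx' : p ^ i • x = 0 := hx
    have hy' : p ^ i • y = 0 := hy
    rw [smul_add, hx', hy', add_zero]
  · intro x hx
    show p ^ i • (-x) = 0
    have hx' : p ^ i • x = 0 := hx
    rw [smul_neg, hx', neg_zero]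
  · intro x hx a
    have hx' : p ^ i • x = 0 := hx
    constructor
    · show p ^ i • star x a = 0
      have hann := ann_DpH h2' hx'
      have hcz : cpow x (p ^ i) = 0 := cpow_pow_eq_zero hp hineq hann
      have hrel : ∀ b : A,
          ∑ j ∈ Finset.range (p ^ i), ((p ^ i).choose (j+1)) • DpH x (j+1) b = 0 :=
        fun b => sum_rel hcz b
      have hd := down hp hineq h1' (hnil x) hrel (n * M) 1 a (le_refl 1) (by omega)
      rwa [show DpH x 1 a = star x a from rfl] at hd
    · show p ^ i • star a x = 0
      rw [show star a x = sHom a x from rfl, ← map_nsmul, hx', map_zero]
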